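/- Let m ≥ 2, n ≥ 3, and let f be a maximal IC-coloring of K_{1(n),m} with vertices listed as u_1, …, u_{m+n} so that f(u_i) < f(u_{i+1}) for all i; set f_0 = 0, f_i = f(u_1) + ⋯ + f(u_i), s_0 = 0, s_i = f(u_i), r_i = s_i − ∑_{j=0}^{i−1} s_j, and k_0 = max{ j : u_j ∈ V_0 }. Suppose S_1 = { i < k_0 : r_i = 1 and u_i ∈ V_0 } is nonempty; let i_1 = min S_1 and S_2 = { i ≥ i_1 + 1 : u_i ∈ V_0 and f(u_i) > f_{i−1} − f(u_{i_1}) }. If S_2 is nonempty, then f(K_{1(n),m}) ≤ 2^{m+n} − 2^m + 1. -/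

import Mathlib

/-- The join `H₀ ∨ H₁` of two graphs: all edges of `H₀`, all edges of `H₁`, and all
pairs with one endpoint in each. -/
def graphJoin {α β : Type*} (G : SimpleGraph α) (H : SimpleGraph β) :
    SimpleGraph (α ⊕ β) where
  Adj x y :=
    match x, y with
    | Sum.inl a, Sum.inl b => G.Adj a b
    | Sum.inr a, Sum.inr b => H.Adj a b
    | Sum.inl _, Sum.inr _ => True
    | Sum.inr _, Sum.inl _ => True
  symm := by
    refine ⟨?_⟩
    rintro (a | a) (b | b) h
    · exact G.adj_symm h
    · trivial
    · trivial
    · exact H.adj_symm h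
  loopless := by
    refine ⟨?_⟩
    rintro (a | a) h
    · exact G.irrefl h
    · exact H.irrefl h

/-- A coloring `f : V(G) → ℕ` (positive-valued) is an IC-coloring if every integer
`k` with `1 ≤ k ≤ f(G)` is the `f`-sum of some nonempty vertex subset inducing a
connected subgraph. -/
def IsICColoring {α : Type*} [Fintype α] (G : SimpleGraph α) (f : α → ℕ) : Prop :=
  (∀ v, 0 < f v) ∧
    ∀ k : ℕ, 1 ≤ k → k ≤ ∑ v, f v →
      ∃ S : Finset α, S.Nonempty ∧ (G.induce (S : Set α)).Connected ∧
        ∑ v ∈ S, f v = k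

/-- The IC-index `M(G)`: the maximum of `f(G)` over all IC-colorings `f` of `G`. -/
noncomputable def ICIndex {α : Type*} [Fintype α] (G : SimpleGraph α) : ℕ :=
  sSup {t | ∃ f : α → ℕ, IsICColoring G f ∧ ∑ v, f v = t}

/-- `K_{1(n),m} = O_m ∨ K_n`: the complete `(n+1)`-partite graph with `n` parts of
size one and one part (`V₀ = Fin m`, the left summand) of size `m`. -/
def K1nm (m n : ℕ) : SimpleGraph (Fin m ⊕ Fin n) :=
  graphJoin (⊥ : SimpleGraph (Fin m)) (⊤ : SimpleGraph (Fin n))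

/-!
List the vertices as `u 1, …, u p` with `g j = f (u j)` increasing and write
`F k = g 1 + ⋯ + g k`. Every value `F (j - 1) + 1` is a subset sum, so `g j ≤ F (j - 1) + 1`, and
the deficits `λ j = F (j - 1) + 1 - g j` satisfy `∑ λ j 2 ^ (p - j) = 2 ^ p - 1 - F p`. It therefore
suffices to bound this weighted sum below by `2 ^ m - 2`.

Vertices of `V₀` before `i₁` have `λ ≥ 1` by the minimality of `i₁`. A vertex `u ℓ ∈ V₀` after `i₁`
either has `λ ℓ > g i₁`, or it overshoots: `g ℓ + g i₁ > F (ℓ - 1)`. In the latter case a connected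
set of value `g ℓ + g i₁` cannot be the independent pair `{u ℓ, u i₁}` (the only set of that value
within the first `ℓ` vertices), so it contains a later vertex and `g (ℓ + 1) ≤ g ℓ + g i₁`, which
makes `λ (ℓ + 1)` large. These local estimates are summed with a potential that doubles at each
vertex of `V₀`, read from right to left; `n ≥ 3` provides the slack when `ℓ` is small.
-/

open Finset

section PrefixSum

def prefixSum (g : ℕ → ℕ) (k : ℕ) : ℕ := ∑ j ∈ Icc 1 k, g j

variable {g : ℕ → ℕ}

@[simp] lemma prefixSum_zero : prefixSum g 0 = 0 := by simp [prefixSum]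

lemma prefixSum_succ (k : ℕ) : prefixSum g (k + 1) = prefixSum g k + g (k + 1) :=
  sum_Icc_succ_top (by omega) g

lemma prefixSum_mono : Monotone (prefixSum g) := fun _ _ hab =>
  sum_le_sum_of_subset (Icc_subset_Icc_right hab)

lemma sum_le_prefixSum {T : Finset ℕ} {k : ℕ} (hT : T ⊆ Icc 1 k) :
    ∑ j ∈ T, g j ≤ prefixSum g k :=
  sum_le_sum_of_subset hT

lemma sum_range_succ_eq_prefixSum {s : ℕ → ℤ} {N : ℕ} (hs0 : s 0 = 0)
    (hs : ∀ i, 1 ≤ i → i ≤ N → s i = g i) {k : ℕ} (hk : k ≤ N) :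
    ∑ j ∈ range (k + 1), s j = prefixSum g k := by
  induction k with
  | zero => simp [hs0]
  | succ k ih =>
    rw [sum_range_succ, ih (by omega), hs (k + 1) (by omega) hk, prefixSum_succ]
    push_cast
    ring

lemma sub_sum_range_eq_sub_prefixSum {s : ℕ → ℤ} {N : ℕ} (hs0 : s 0 = 0)
    (hs : ∀ i, 1 ≤ i → i ≤ N → s i = g i) {j : ℕ} (hj : j ∈ Icc 1 N) :
    s j - ∑ i ∈ range j, s i = g j - prefixSum g (j - 1) := by
  obtain ⟨hj₁, hj₂⟩ := mem_Icc.1 hj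
  rw [hs j hj₁ hj₂, ← Nat.sub_add_cancel hj₁, sum_range_succ_eq_prefixSum hs0 hs (by omega),
    Nat.sub_add_cancel hj₁]

lemma le_self_of_strictMonoOn {p : ℕ} (hg : StrictMonoOn g (Set.Icc 1 p)) (hpos : ∀ j, 0 < g j) :
    ∀ j ∈ Icc 1 p, j ≤ g j := by
  intro j hj
  induction j with
  | zero => simp at hj
  | succ j ih =>
    rcases Nat.eq_zero_or_pos j with rfl | hj0
    · exact hpos 1
    · have hj' := mem_Icc.1 hj
      have := hg ⟨hj0, by omega⟩ ⟨hj'.1, hj'.2⟩ (Nat.lt_succ_self j)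
      have := ih (mem_Icc.2 ⟨hj0, by omega⟩)
      omega

lemma mul_succ_le_two_mul_prefixSum {k : ℕ} (h : ∀ j ∈ Icc 1 k, j ≤ g j) :
    k * (k + 1) ≤ 2 * prefixSum g k := by
  induction k with
  | zero => simp
  | succ k ih =>
    have hk := h (k + 1) (by simp)
    have := ih fun j hj => h j (Icc_subset_Icc_right (by omega) hj)
    rw [prefixSum_succ]
    nlinarith

lemma exists_gt_of_prefixSum_lt {T : Finset ℕ} {p k : ℕ} (hT : T ⊆ Icc 1 p)
    (h : prefixSum g k < ∑ j ∈ T, g j) : ∃ τ ∈ T, k < τ := by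
  by_contra! hle
  exact h.not_ge <| sum_le_prefixSum fun τ hτ => mem_Icc.2 ⟨(mem_Icc.1 (hT hτ)).1, hle τ hτ⟩

lemma le_sum_of_exists_gt {T : Finset ℕ} {p k : ℕ} (hg : MonotoneOn g (Set.Icc 1 p))
    (hT : T ⊆ Icc 1 p) (h : ∃ τ ∈ T, k < τ) : k < p ∧ g (k + 1) ≤ ∑ j ∈ T, g j := by
  obtain ⟨τ, hτT, hkτ⟩ := h
  have hτ := mem_Icc.1 (hT hτT)
  refine ⟨by omega, ?_⟩
  calc g (k + 1) ≤ g τ := hg ⟨by omega, by omega⟩ ⟨hτ.1, hτ.2⟩ hkτ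
    _ ≤ ∑ j ∈ T, g j := single_le_sum (fun _ _ => Nat.zero_le _) hτT

lemma le_prefixSum_add_one_of_exists_sum_eq {p j : ℕ} (hg : MonotoneOn g (Set.Icc 1 p))
    (hj : j ∈ Set.Icc 1 p) (hrep : ∃ T ⊆ Icc 1 p, ∑ τ ∈ T, g τ = prefixSum g (j - 1) + 1) :
    g j ≤ prefixSum g (j - 1) + 1 := by
  obtain ⟨T, hT, hsum⟩ := hrep
  have hlt : prefixSum g (j - 1) < ∑ τ ∈ T, g τ := by omega
  have := (le_sum_of_exists_gt hg hT (exists_gt_of_prefixSum_lt hT hlt)).2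
  rwa [Nat.sub_add_cancel hj.1, hsum] at this

lemma eq_singleton_of_sum_eq {p i : ℕ} {T : Finset ℕ} (hg : StrictMonoOn g (Set.Icc 1 p))
    (hpos : ∀ j, 0 < g j) (hi : i ∈ Set.Icc 1 p) (hgi : prefixSum g (i - 1) < g i)
    (hT : T ⊆ Icc 1 p) (hsum : ∑ j ∈ T, g j = g i) : T = {i} := by
  obtain ⟨τ, hτT, hiτ⟩ := exists_gt_of_prefixSum_lt hT (hsum ▸ hgi)
  have hτ := mem_Icc.1 (hT hτT)
  have hgτ : g τ ≤ g i := hsum ▸ single_le_sum (fun _ _ => Nat.zero_le _) hτT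
  obtain rfl : τ = i := by
    by_contra hne
    exact (hg hi ⟨hτ.1, hτ.2⟩ (by omega)).not_ge hgτ
  have hrest : ∑ j ∈ T.erase τ, g j = 0 := by
    have := add_sum_erase T g hτT
    omega
  refine eq_singleton_iff_unique_mem.2 ⟨hτT, fun j hj => ?_⟩
  by_contra hne
  exact (hpos j).ne' ((sum_eq_zero_iff.1 hrest) j (mem_erase.2 ⟨hne, hj⟩))

end PrefixSum

section Deficit

def deficit (g : ℕ → ℕ) (j : ℕ) : ℕ := prefixSum g (j - 1) + 1 - g j

variable {g : ℕ → ℕ}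

lemma deficit_add_self {j : ℕ} (h : g j ≤ prefixSum g (j - 1) + 1) :
    deficit g j + g j = prefixSum g (j - 1) + 1 :=
  Nat.sub_add_cancel h

lemma sum_deficit_mul_pow_add_prefixSum {k : ℕ}
    (h : ∀ j ∈ Icc 1 k, g j ≤ prefixSum g (j - 1) + 1) :
    ∑ j ∈ Icc 1 k, deficit g j * 2 ^ (k - j) + prefixSum g k + 1 = 2 ^ k := by
  induction k with
  | zero => simp
  | succ k ih =>
    have ih := ih fun j hj => h j (Icc_subset_Icc_right (by omega) hj)
    have hlast := deficit_add_self (h (k + 1) (by simp))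
    have hdouble : ∑ j ∈ Icc 1 k, deficit g j * 2 ^ (k + 1 - j) =
        2 * ∑ j ∈ Icc 1 k, deficit g j * 2 ^ (k - j) := by
      rw [mul_sum]
      refine sum_congr rfl fun j hj => ?_
      rw [show k + 1 - j = k - j + 1 by have := (mem_Icc.1 hj).2; omega, pow_succ]
      ring
    rw [sum_Icc_succ_top (by omega), hdouble, prefixSum_succ, pow_succ]
    simp only [Nat.add_sub_cancel, Nat.sub_self, pow_zero, mul_one] at hlast ⊢
    omega

end Deficit

lemma le_sum_Ico_add_of_le_add {Ψ w : ℕ → ℕ} {a b : ℕ} (hab : a ≤ b)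
    (h : ∀ x ∈ Ico a b, Ψ x ≤ w x + Ψ (x + 1)) : Ψ a ≤ ∑ x ∈ Ico a b, w x + Ψ b := by
  induction b, hab using Nat.le_induction with
  | base => simp
  | succ b hab ih =>
    have h₁ := ih fun x hx => h x (Ico_subset_Ico_right (by omega) hx)
    have h₂ := h b (mem_Ico.2 ⟨hab, by omega⟩)
    rw [sum_Ico_succ_top hab]
    omega

section CountFrom

def countFrom (L : Finset ℕ) (x : ℕ) : ℕ := #{ℓ ∈ L | x ≤ ℓ}

variable {L : Finset ℕ}

lemma countFrom_antitone : Antitone (countFrom L) := fun _ _ hxy =>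
  card_le_card <| monotone_filter_right L fun _ _ h => hxy.trans h

lemma countFrom_eq_add (x : ℕ) :
    countFrom L x = countFrom L (x + 1) + if x ∈ L then 1 else 0 := by
  unfold countFrom
  split_ifs with hx
  · rw [← card_insert_of_notMem (a := x) (s := {ℓ ∈ L | x + 1 ≤ ℓ}) (by simp)]
    congr 1
    ext ℓ
    simp only [mem_filter, mem_insert]
    constructor
    · rintro ⟨hℓ, hxℓ⟩
      rcases hxℓ.eq_or_lt with rfl | h
      · exact Or.inl rfl
      · exact Or.inr ⟨hℓ, h⟩
    · rintro (rfl | ⟨hℓ, h⟩)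
      · exact ⟨hx, le_rfl⟩
      · exact ⟨hℓ, by omega⟩
  · rw [add_zero]
    congr 1
    refine filter_congr fun ℓ hℓ => ?_
    have : ℓ ≠ x := fun h => hx (h ▸ hℓ)
    omega

lemma countFrom_succ_le {p : ℕ} (hL : L ⊆ Icc 1 p) (x : ℕ) : countFrom L (x + 1) ≤ p - x := by
  calc countFrom L (x + 1) ≤ #(Icc (x + 1) p) := card_le_card fun ℓ hℓ => by
        obtain ⟨hℓL, hxℓ⟩ := mem_filter.1 hℓ
        exact mem_Icc.2 ⟨hxℓ, (mem_Icc.1 (hL hℓL)).2⟩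
    _ = p - x := by simp

lemma countFrom_one {p : ℕ} (hL : L ⊆ Icc 1 p) : countFrom L 1 = #L :=
  congrArg card <| filter_true_of_mem fun _ hℓ => (mem_Icc.1 (hL hℓ)).1

end CountFrom

lemma mul_two_pow_lower_bounds {lam y ρ : ℕ} (hlam : y * (y + 1) + 2 ≤ 4 * lam)
    (hρ : 3 ≤ y + ρ) :
    2 ≤ lam * 2 ^ ρ ∧ (4 ≤ y + ρ → 4 ≤ lam * 2 ^ ρ ∧ (2 ≤ lam → 6 ≤ lam * 2 ^ ρ)) := by
  rcases (show ρ = 0 ∨ ρ = 1 ∨ 2 ≤ ρ by omega) with rfl | rfl | hρ2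
  · have : 3 * 4 ≤ y * (y + 1) := Nat.mul_le_mul (by omega) (by omega)
    refine ⟨by omega, fun hy => ?_⟩
    have : 4 * 5 ≤ y * (y + 1) := Nat.mul_le_mul (by omega) (by omega)
    omega
  · have : 2 * 3 ≤ y * (y + 1) := Nat.mul_le_mul (by omega) (by omega)
    refine ⟨by omega, fun hy => ?_⟩
    have : 3 * 4 ≤ y * (y + 1) := Nat.mul_le_mul (by omega) (by omega)
    omega
  · have : 4 ≤ 2 ^ ρ := by
      calc 4 = 2 ^ 2 := rfl
        _ ≤ 2 ^ ρ := Nat.pow_le_pow_right (by norm_num) hρ2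
    have : 1 ≤ lam := by omega
    refine ⟨by nlinarith, fun _ => ⟨by nlinarith, fun h => by nlinarith⟩⟩

section Potential

def overshootSet (g : ℕ → ℕ) (L : Finset ℕ) (i : ℕ) : Finset ℕ :=
  {ℓ ∈ L | i < ℓ ∧ prefixSum g (ℓ - 1) < g ℓ + g i}

/-- `potential g L i x - 2` bounds `∑ j ∈ [x, p], deficit g j * 2 ^ (p - j)` from below. The
exponent counts the elements of `L` from `x` on (plus one past `i`); the factor `2` when `x - 1`
overshoots records that the debt of `x - 1` is paid by the deficit at `x`. -/
def potential (g : ℕ → ℕ) (L : Finset ℕ) (i x : ℕ) : ℕ :=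
  (if x - 1 ∈ overshootSet g L i then 2 else 1) *
    2 ^ (countFrom L x + if i < x then 1 else 0)

variable {g : ℕ → ℕ} {L : Finset ℕ} {i p : ℕ}

lemma lt_of_mem_overshootSet {ℓ : ℕ} (h : ℓ ∈ overshootSet g L i) : i < ℓ :=
  (mem_filter.1 h).2.1

lemma potential_one (hL : L ⊆ Icc 1 p) (hiL : i ∈ L) : potential g L i 1 = 2 ^ #L := by
  have hi := (mem_Icc.1 (hL hiL)).1
  have : 0 ∉ overshootSet g L i := fun h => by have := lt_of_mem_overshootSet h; omega
  simp [potential, this, countFrom_one hL, show ¬ i < 1 by omega]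

lemma potential_last (hL : L ⊆ Icc 1 p) (hiL : i ∈ L)
    (hafter : ∀ ℓ ∈ overshootSet g L i, ℓ < p ∧ g (ℓ + 1) ≤ g ℓ + g i) :
    potential g L i (p + 1) = 2 := by
  have hip := (mem_Icc.1 (hL hiL)).2
  have : p ∉ overshootSet g L i := fun h => (hafter p h).1.false
  have := countFrom_succ_le hL p
  simp_all [potential, show i < p + 1 by omega]

lemma potential_self (hiL : i ∈ L) : potential g L i i = potential g L i (i + 1) := by
  have h₁ : i - 1 ∉ overshootSet g L i := fun h => by have := lt_of_mem_overshootSet h; omega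
  have h₂ : i ∉ overshootSet g L i := fun h => (lt_of_mem_overshootSet h).false
  simp [potential, h₁, h₂, countFrom_eq_add i, hiL, pow_succ]

lemma potential_step_of_lt (hL : L ⊆ Icc 1 p)
    (hbefore : ∀ ℓ ∈ L, ℓ < i → g ℓ ≤ prefixSum g (ℓ - 1)) {x : ℕ} (hxi : x < i) :
    potential g L i x ≤ deficit g x * 2 ^ (p - x) + potential g L i (x + 1) := by
  have h₁ : x - 1 ∉ overshootSet g L i := fun h => by have := lt_of_mem_overshootSet h; omega
  have h₂ : x ∉ overshootSet g L i := fun h => by have := lt_of_mem_overshootSet h; omega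
  simp only [potential, Nat.add_sub_cancel, h₁, h₂, if_false, one_mul,
    if_neg (show ¬ i < x by omega), if_neg (show ¬ i < x + 1 by omega), add_zero,
    countFrom_eq_add x]
  split_ifs with hxL
  · have hdef : 1 ≤ deficit g x := by have := hbefore x hxL hxi; unfold deficit; omega
    have hpow : 2 ^ countFrom L (x + 1) ≤ 2 ^ (p - x) :=
      Nat.pow_le_pow_right (by norm_num) (countFrom_succ_le hL x)
    have := Nat.mul_le_mul hdef hpow
    rw [pow_succ]
    omega
  · rw [add_zero]
    omega

lemma deficit_ge_of_notMem_overshootSet {x : ℕ} (hxL : x ∈ L) (hix : i < x)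
    (hx : x ∉ overshootSet g L i) : g i + 1 ≤ deficit g x := by
  have : g x + g i ≤ prefixSum g (x - 1) := by
    by_contra h
    exact hx (mem_filter.2 ⟨hxL, hix, by omega⟩)
  unfold deficit
  omega

lemma four_mul_deficit_ge (hg : StrictMonoOn g (Set.Icc 1 p)) (hpos : ∀ j, 0 < g j)
    (hle : ∀ j ∈ Icc 1 p, g j ≤ prefixSum g (j - 1) + 1) (hi : 1 ≤ i)
    (hgi : g i = prefixSum g (i - 1) + 1)
    (hafter : ∀ ℓ ∈ overshootSet g L i, ℓ < p ∧ g (ℓ + 1) ≤ g ℓ + g i) {y : ℕ}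
    (hy : y + 1 ∈ overshootSet g L i) :
    y * (y + 1) + 2 ≤ 4 * deficit g (y + 2) := by
  have hiy : i ≤ y := by have := lt_of_mem_overshootSet hy; omega
  obtain ⟨hyp, hstep⟩ := hafter _ hy
  rw [show y + 1 + 1 = y + 2 from rfl] at hstep
  have hdef := deficit_add_self (hle (y + 2) (mem_Icc.2 ⟨by omega, by omega⟩))
  rw [show y + 2 - 1 = y + 1 by omega, prefixSum_succ] at hdef
  have hFi : prefixSum g i ≤ prefixSum g y := prefixSum_mono hiy
  have hFi' := prefixSum_succ (g := g) (i - 1)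
  rw [Nat.sub_add_cancel hi] at hFi'
  have hgauss := mul_succ_le_two_mul_prefixSum (k := y) fun j hj =>
    le_self_of_strictMonoOn hg hpos j (Icc_subset_Icc_right (by omega) hj)
  omega

lemma countFrom_add_two_le (hL : L ⊆ Icc 1 p) (hiL : i ∈ L) {y : ℕ}
    (hy : y + 1 ∈ overshootSet g L i) :
    countFrom L (y + 3) + (if y + 2 ∈ L then 1 else 0) + 2 ≤ #L := by
  have hiy := lt_of_mem_overshootSet hy
  have hyL : y + 1 ∈ L := (mem_filter.1 hy).1
  have h₁ : countFrom L i = countFrom L (i + 1) + 1 := by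
    simpa [hiL] using countFrom_eq_add (L := L) i
  have h₂ : countFrom L (y + 1) = countFrom L (y + 2) + 1 := by
    simpa [hyL] using countFrom_eq_add (L := L) (y + 1)
  have h₃ := countFrom_eq_add (L := L) (y + 2)
  rw [show y + 2 + 1 = y + 3 from rfl] at h₃
  have h₄ := countFrom_antitone (L := L) (show i + 1 ≤ y + 1 by omega)
  have h₅ := countFrom_antitone (L := L) (show 1 ≤ i from (mem_Icc.1 (hL hiL)).1)
  rw [countFrom_one hL] at h₅
  omega

/-- The left side is
`(potential g L i (y + 2) - potential g L i (y + 3)) / 2 ^ countFrom L (y + 3)`. -/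
lemma deficit_mul_two_pow_ge_of_pred_mem_overshootSet (hL : L ⊆ Icc 1 p)
    (hg : StrictMonoOn g (Set.Icc 1 p)) (hpos : ∀ j, 0 < g j)
    (hle : ∀ j ∈ Icc 1 p, g j ≤ prefixSum g (j - 1) + 1) (hiL : i ∈ L)
    (hgi : g i = prefixSum g (i - 1) + 1)
    (hafter : ∀ ℓ ∈ overshootSet g L i, ℓ < p ∧ g (ℓ + 1) ≤ g ℓ + g i) (hp : #L + 3 ≤ p)
    {y ρ : ℕ} (hy : y + 1 ∈ overshootSet g L i) (hρ : p - (y + 2) = countFrom L (y + 3) + ρ) :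
    (if y + 2 ∈ L then (if y + 2 ∈ overshootSet g L i then 4 else 6) else 2) ≤
      deficit g (y + 2) * 2 ^ ρ := by
  have hi : 1 ≤ i := (mem_Icc.1 (hL hiL)).1
  have hcnt := countFrom_add_two_le hL hiL hy
  obtain ⟨hsmall, hlarge⟩ := mul_two_pow_lower_bounds (ρ := ρ)
    (four_mul_deficit_ge hg hpos hle hi hgi hafter hy) (by split_ifs at hcnt <;> omega)
  split_ifs with hxL hxB
  · exact (hlarge (by simp only [hxL, if_true] at hcnt; omega)).1
  · refine (hlarge (by simp only [hxL, if_true] at hcnt; omega)).2 ?_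
    exact (Nat.succ_le_succ (hpos i)).trans
      (deficit_ge_of_notMem_overshootSet hxL (by have := lt_of_mem_overshootSet hy; omega) hxB)
  · exact hsmall

lemma potential_step_of_gt (hL : L ⊆ Icc 1 p) (hg : StrictMonoOn g (Set.Icc 1 p))
    (hpos : ∀ j, 0 < g j) (hle : ∀ j ∈ Icc 1 p, g j ≤ prefixSum g (j - 1) + 1) (hiL : i ∈ L)
    (hgi : g i = prefixSum g (i - 1) + 1)
    (hafter : ∀ ℓ ∈ overshootSet g L i, ℓ < p ∧ g (ℓ + 1) ≤ g ℓ + g i) (hp : #L + 3 ≤ p)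
    {x : ℕ} (hix : i < x) :
    potential g L i x ≤ deficit g x * 2 ^ (p - x) + potential g L i (x + 1) := by
  obtain ⟨ρ, hρ⟩ : ∃ ρ, p - x = countFrom L (x + 1) + ρ :=
    ⟨p - x - countFrom L (x + 1), by have := countFrom_succ_le hL x; omega⟩
  have hBL : x ∈ overshootSet g L i → x ∈ L := fun h => (mem_filter.1 h).1
  suffices key : (if x - 1 ∈ overshootSet g L i then 2 else 1) * (2 ^ (if x ∈ L then 1 else 0) * 2)
      ≤ deficit g x * 2 ^ ρ + (if x ∈ overshootSet g L i then 2 else 1) * 2 by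
    have := Nat.mul_le_mul_left (2 ^ countFrom L (x + 1)) key
    simp only [potential, countFrom_eq_add x, if_pos hix, if_pos (show i < x + 1 by omega),
      Nat.add_sub_cancel, hρ, pow_add, pow_one]
    linarith
  by_cases hD : x - 1 ∈ overshootSet g L i
  · obtain ⟨y, rfl⟩ : ∃ y, x = y + 2 := ⟨x - 2, by have := lt_of_mem_overshootSet hD; omega⟩
    have hD' : y + 1 ∈ overshootSet g L i := hD
    have := deficit_mul_two_pow_ge_of_pred_mem_overshootSet hL hg hpos hle hiL hgi hafter hp hD' hρ
    by_cases hxL : y + 2 ∈ L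
    · by_cases hxB : y + 2 ∈ overshootSet g L i <;> simp_all
    · simp_all
  · have : 1 ≤ 2 ^ ρ := Nat.one_le_two_pow
    by_cases hxL : x ∈ L
    · by_cases hxB : x ∈ overshootSet g L i
      · simp [hD, hxL, hxB]
      · have := (Nat.succ_le_succ (hpos i)).trans
          (deficit_ge_of_notMem_overshootSet hxL hix hxB)
        simp [hD, hxL, hxB]
        nlinarith
    · have hxB : x ∉ overshootSet g L i := fun h => hxL (hBL h)
      simp [hD, hxL, hxB]

end Potential

theorem prefixSum_add_two_pow_card_le {g : ℕ → ℕ} {L : Finset ℕ} {i p : ℕ}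
    (hL : L ⊆ Icc 1 p) (hg : StrictMonoOn g (Set.Icc 1 p)) (hpos : ∀ j, 0 < g j)
    (hle : ∀ j ∈ Icc 1 p, g j ≤ prefixSum g (j - 1) + 1) (hiL : i ∈ L)
    (hgi : g i = prefixSum g (i - 1) + 1)
    (hbefore : ∀ ℓ ∈ L, ℓ < i → g ℓ ≤ prefixSum g (ℓ - 1))
    (hafter : ∀ ℓ ∈ overshootSet g L i, ℓ < p ∧ g (ℓ + 1) ≤ g ℓ + g i) (hp : #L + 3 ≤ p) :
    prefixSum g p + 2 ^ #L ≤ 2 ^ p + 1 := by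
  have htel := le_sum_Ico_add_of_le_add (Ψ := potential g L i)
    (w := fun x => deficit g x * 2 ^ (p - x)) (show 1 ≤ p + 1 by omega) fun x _ => by
      rcases lt_trichotomy x i with h | rfl | h
      · exact potential_step_of_lt hL hbefore h
      · rw [potential_self hiL]
        omega
      · exact potential_step_of_gt hL hg hpos hle hiL hgi hafter hp h
  rw [potential_one hL hiL, potential_last hL hiL hafter, Ico_add_one_right_eq_Icc] at htel
  have := sum_deficit_mul_pow_add_prefixSum hle
  omega

lemma SimpleGraph.not_connected_induce_pair {V : Type*} {G : SimpleGraph V} {a b : V}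
    (hab : a ≠ b) (h : ¬ G.Adj a b) : ¬ (G.induce {a, b}).Connected := by
  intro hconn
  have hbot : G.induce {a, b} = ⊥ := by
    ext ⟨x, hx⟩ ⟨y, hy⟩
    simp only [SimpleGraph.comap_adj, Function.Embedding.coe_subtype, SimpleGraph.bot_adj,
      iff_false]
    rcases hx with rfl | rfl <;> rcases hy with rfl | rfl
    exacts [G.irrefl, h, fun h' => h h'.symm, G.irrefl]
  have := hconn.preconnected ⟨a, by simp⟩ ⟨b, by simp⟩
  rw [hbot, SimpleGraph.reachable_bot] at this
  exact hab (congrArg Subtype.val this)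

lemma K1nm_not_connected_induce_pair {m n : ℕ} {v w : Fin m ⊕ Fin n} (hvw : v ≠ w)
    (hv : v.isLeft) (hw : w.isLeft) : ¬ ((K1nm m n).induce {v, w}).Connected := by
  obtain ⟨a, rfl⟩ := Sum.isLeft_iff.1 hv
  obtain ⟨b, rfl⟩ := Sum.isLeft_iff.1 hw
  exact SimpleGraph.not_connected_induce_pair hvw (by simp [K1nm, graphJoin])

section Enumeration

variable {α : Type*} [DecidableEq α] {u : ℕ → α} {p : ℕ}

lemma image_filter_mem_eq (hu : Set.BijOn u (Set.Icc 1 p) Set.univ) (S : Finset α) :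
    {j ∈ Icc 1 p | u j ∈ S}.image u = S := by
  ext v
  simp only [mem_image, mem_filter, mem_Icc]
  constructor
  · rintro ⟨j, ⟨-, hj⟩, rfl⟩
    exact hj
  · intro hv
    obtain ⟨j, hj, rfl⟩ := hu.surjOn (Set.mem_univ v)
    exact ⟨j, ⟨hj, hv⟩, rfl⟩

lemma injOn_filter_mem (hu : Set.BijOn u (Set.Icc 1 p) Set.univ) (S : Finset α) :
    Set.InjOn u ({j ∈ Icc 1 p | u j ∈ S} : Finset ℕ) :=
  hu.injOn.mono fun j hj => by simpa using (mem_filter.1 hj).1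

lemma card_filter_mem_eq (hu : Set.BijOn u (Set.Icc 1 p) Set.univ) (S : Finset α) :
    #{j ∈ Icc 1 p | u j ∈ S} = #S := by
  conv_rhs => rw [← image_filter_mem_eq hu S]
  exact (card_image_of_injOn (injOn_filter_mem hu S)).symm

lemma sum_filter_mem_eq (hu : Set.BijOn u (Set.Icc 1 p) Set.univ) (f : α → ℕ) (S : Finset α) :
    ∑ j ∈ Icc 1 p with u j ∈ S, (f ∘ u) j = ∑ v ∈ S, f v := by
  conv_rhs => rw [← image_filter_mem_eq hu S]
  exact (sum_image (injOn_filter_mem hu S)).symm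

variable [Fintype α] {f : α → ℕ}

lemma sum_eq_prefixSum (hu : Set.BijOn u (Set.Icc 1 p) Set.univ) :
    ∑ v, f v = prefixSum (f ∘ u) p := by
  rw [← sum_filter_mem_eq hu, filter_true_of_mem fun _ _ => mem_univ _]
  rfl

variable {G : SimpleGraph α}

lemma IsICColoring.exists_index_set (hf : IsICColoring G f)
    (hu : Set.BijOn u (Set.Icc 1 p) Set.univ) {k : ℕ} (hk₁ : 1 ≤ k)
    (hk : k ≤ prefixSum (f ∘ u) p) :
    ∃ T ⊆ Icc 1 p, (G.induce (T.image u : Set α)).Connected ∧ ∑ j ∈ T, (f ∘ u) j = k := by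
  obtain ⟨S, -, hS, hsum⟩ := hf.2 k hk₁ (sum_eq_prefixSum hu ▸ hk)
  refine ⟨_, filter_subset _ _, ?_, (sum_filter_mem_eq hu f S).trans hsum⟩
  rwa [image_filter_mem_eq hu S]

lemma IsICColoring.le_prefixSum_add_one (hf : IsICColoring G f)
    (hu : Set.BijOn u (Set.Icc 1 p) Set.univ)
    (hg : MonotoneOn (f ∘ u) (Set.Icc 1 p)) {j : ℕ} (hj : j ∈ Set.Icc 1 p) :
    (f ∘ u) j ≤ prefixSum (f ∘ u) (j - 1) + 1 := by
  refine le_prefixSum_add_one_of_exists_sum_eq hg hj ?_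
  have hk : prefixSum (f ∘ u) (j - 1) + 1 ≤ prefixSum (f ∘ u) p := by
    have h₁ := prefixSum_succ (g := f ∘ u) (j - 1)
    rw [Nat.sub_add_cancel hj.1] at h₁
    have h₂ := prefixSum_mono (g := f ∘ u) hj.2
    have h₃ : 0 < (f ∘ u) j := hf.1 (u j)
    omega
  obtain ⟨T, hT, -, hsum⟩ := hf.exists_index_set hu (by omega) hk
  exact ⟨T, hT, hsum⟩

lemma IsICColoring.succ_le_of_overshoot (hf : IsICColoring G f)
    (hu : Set.BijOn u (Set.Icc 1 p) Set.univ)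
    (hg : StrictMonoOn (f ∘ u) (Set.Icc 1 p)) {i ℓ : ℕ} (hi : i ∈ Set.Icc 1 p)
    (hgi : prefixSum (f ∘ u) (i - 1) < (f ∘ u) i) (hℓ : ℓ ∈ Set.Icc 1 p) (hiℓ : i < ℓ)
    (hpair : ¬ (G.induce {u ℓ, u i}).Connected)
    (hover : prefixSum (f ∘ u) (ℓ - 1) < (f ∘ u) ℓ + (f ∘ u) i) :
    ℓ < p ∧ (f ∘ u) (ℓ + 1) ≤ (f ∘ u) ℓ + (f ∘ u) i := by
  have hk : (f ∘ u) ℓ + (f ∘ u) i ≤ prefixSum (f ∘ u) p := by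
    rw [← sum_pair (f := f ∘ u) hiℓ.ne']
    exact sum_le_prefixSum fun j hj => by
      rcases mem_insert.1 hj with rfl | hj
      · exact mem_Icc.2 hℓ
      · exact mem_Icc.2 (mem_singleton.1 hj ▸ hi)
  obtain ⟨T, hT, hconn, hsum⟩ := hf.exists_index_set hu (by omega) hk
  rw [← hsum]
  refine le_sum_of_exists_gt hg.monotoneOn hT ?_
  by_contra! hTℓ
  by_cases hℓT : ℓ ∈ T
  · have hrest : ∑ j ∈ T.erase ℓ, (f ∘ u) j = (f ∘ u) i := by
      have := add_sum_erase T (f ∘ u) hℓT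
      omega
    have hTi := eq_singleton_of_sum_eq hg (fun j => hf.1 (u j)) hi hgi
      ((erase_subset _ _).trans hT) hrest
    apply hpair
    rwa [← insert_erase hℓT, hTi, image_insert, image_singleton, coe_pair] at hconn
  · have : ∑ j ∈ T, (f ∘ u) j ≤ prefixSum (f ∘ u) (ℓ - 1) :=
      sum_le_prefixSum fun τ hτ => by
        have := mem_Icc.1 (hT hτ)
        have := hTℓ τ hτ
        have : τ ≠ ℓ := fun h => hℓT (h ▸ hτ)
        exact mem_Icc.2 ⟨by omega, by omega⟩
    omega

end Enumeration

lemma card_filter_isLeft_comp {m n p : ℕ} {u : ℕ → Fin m ⊕ Fin n}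
    (hu : Set.BijOn u (Set.Icc 1 p) Set.univ) : #{j ∈ Icc 1 p | (u j).isLeft} = m := by
  have hV₀ : ({v | v.isLeft} : Finset (Fin m ⊕ Fin n)) = univ.map Function.Embedding.inl := by
    ext v
    cases v <;> simp
  calc #{j ∈ Icc 1 p | (u j).isLeft}
      = #{j ∈ Icc 1 p | u j ∈ ({v | v.isLeft} : Finset (Fin m ⊕ Fin n))} := by simp
    _ = m := by rw [card_filter_mem_eq hu, hV₀, card_map, card_univ, Fintype.card_fin]

lemma IsICColoring.K1nm_succ_le_of_mem_overshootSet {m n p : ℕ} {f : Fin m ⊕ Fin n → ℕ}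
    {u : ℕ → Fin m ⊕ Fin n} (hf : IsICColoring (K1nm m n) f)
    (hu : Set.BijOn u (Set.Icc 1 p) Set.univ) (hg : StrictMonoOn (f ∘ u) (Set.Icc 1 p))
    {i ℓ : ℕ} (hi : i ∈ Icc 1 p) (hgi : prefixSum (f ∘ u) (i - 1) < (f ∘ u) i)
    (hileft : (u i).isLeft) (hℓ : ℓ ∈ overshootSet (f ∘ u) {j ∈ Icc 1 p | (u j).isLeft} i) :
    ℓ < p ∧ (f ∘ u) (ℓ + 1) ≤ (f ∘ u) ℓ + (f ∘ u) i := by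
  obtain ⟨hℓL, hiℓ, hover⟩ := mem_filter.1 hℓ
  obtain ⟨hℓp, hℓleft⟩ := mem_filter.1 hℓL
  exact hf.succ_le_of_overshoot hu hg (mem_Icc.1 hi) hgi (mem_Icc.1 hℓp) hiℓ
    (K1nm_not_connected_induce_pair (hu.injOn.ne (mem_Icc.1 hℓp) (mem_Icc.1 hi) hiℓ.ne')
      hℓleft hileft) hover

theorem stmt_17_general (m n : ℕ) (hn : 3 ≤ n)
    (f : Fin m ⊕ Fin n → ℕ) (hf : IsICColoring (K1nm m n) f)
    (u : ℕ → Fin m ⊕ Fin n) (hu : Set.BijOn u (Set.Icc 1 (m + n)) Set.univ)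
    (hmono : ∀ i, 1 ≤ i → i + 1 ≤ m + n → f (u i) < f (u (i + 1)))
    (s r : ℕ → ℤ) (hs0 : s 0 = 0)
    (hs : ∀ i, 1 ≤ i → i ≤ m + n → s i = f (u i))
    (hr : ∀ i, 1 ≤ i → i ≤ m + n → r i = s i - ∑ j ∈ Finset.range i, s j)
    (k₀ : ℕ) (hk₀mem : 1 ≤ k₀ ∧ k₀ ≤ m + n ∧ (u k₀).isLeft = true)
    (i₁ : ℕ)
    (hi₁mem : 1 ≤ i₁ ∧ i₁ < k₀ ∧ r i₁ = 1 ∧ (u i₁).isLeft = true)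
    (hi₁min : ∀ j, 1 ≤ j → j < k₀ → r j = 1 → (u j).isLeft = true → i₁ ≤ j) :
    ∑ v, f v ≤ 2 ^ (m + n) - 2 ^ m + 1 := by
  obtain ⟨hi₁, hi₁k₀, hri₁, hi₁left⟩ := hi₁mem
  have hg : StrictMonoOn (f ∘ u) (Set.Icc 1 (m + n)) :=
    strictMonoOn_of_lt_add_one Set.ordConnected_Icc fun a _ ha ha' => hmono a ha.1 ha'.2
  have hle (j : ℕ) (hj : j ∈ Icc 1 (m + n)) : (f ∘ u) j ≤ prefixSum (f ∘ u) (j - 1) + 1 :=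
    hf.le_prefixSum_add_one hu hg.monotoneOn (mem_Icc.1 hj)
  have hr_eq (j : ℕ) (hj : j ∈ Icc 1 (m + n)) : r j = (f ∘ u) j - prefixSum (f ∘ u) (j - 1) :=
    (hr j (mem_Icc.1 hj).1 (mem_Icc.1 hj).2).trans (sub_sum_range_eq_sub_prefixSum hs0 hs hj)
  have hi₁p : i₁ ∈ Icc 1 (m + n) := mem_Icc.2 ⟨hi₁, by omega⟩
  have hgi : (f ∘ u) i₁ = prefixSum (f ∘ u) (i₁ - 1) + 1 := by
    have := hr_eq i₁ hi₁p
    omega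
  set L := {j ∈ Icc 1 (m + n) | (u j).isLeft}
  have hbefore (ℓ : ℕ) (hℓ : ℓ ∈ L) (hℓi : ℓ < i₁) : (f ∘ u) ℓ ≤ prefixSum (f ∘ u) (ℓ - 1) := by
    obtain ⟨hℓp, hℓleft⟩ := mem_filter.1 hℓ
    have := hle ℓ hℓp
    by_contra h
    have := hi₁min ℓ (mem_Icc.1 hℓp).1 (by omega) (by rw [hr_eq ℓ hℓp]; omega) hℓleft
    omega
  have hbound := prefixSum_add_two_pow_card_le (L := L) (filter_subset _ _) hg
    (fun j => hf.1 (u j)) hle (mem_filter.2 ⟨hi₁p, hi₁left⟩) hgi hbefore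
    (fun ℓ hℓ => hf.K1nm_succ_le_of_mem_overshootSet hu hg hi₁p (by omega) hi₁left hℓ)
    (by rw [card_filter_isLeft_comp hu]; omega)
  rw [card_filter_isLeft_comp hu] at hbound
  have h2m : 2 ^ m ≤ 2 ^ (m + n) := Nat.pow_le_pow_right (by norm_num) (by omega)
  rw [sum_eq_prefixSum hu]
  omega

/-- Setting as in Statement 15 but with `n ≥ 3`: if
`S₂ = { i ≥ i₁ + 1 : u i ∈ V₀ and f (u i) > f_{i−1} − f (u i₁) }` is nonempty, then
`f(K_{1(n),m}) ≤ 2^{m+n} − 2^m + 1`. -/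
theorem stmt_17 (m n : ℕ) (hm : 2 ≤ m) (hn : 3 ≤ n)
    (f : Fin m ⊕ Fin n → ℕ) (hf : IsICColoring (K1nm m n) f)
    (hmax : ∑ v, f v = ICIndex (K1nm m n))
    (u : ℕ → Fin m ⊕ Fin n) (hu : Set.BijOn u (Set.Icc 1 (m + n)) Set.univ)
    (hmono : ∀ i, 1 ≤ i → i + 1 ≤ m + n → f (u i) < f (u (i + 1)))
    (s r : ℕ → ℤ) (hs0 : s 0 = 0)
    (hs : ∀ i, 1 ≤ i → i ≤ m + n → s i = f (u i))
    (hr : ∀ i, 1 ≤ i → i ≤ m + n → r i = s i - ∑ j ∈ Finset.range i, s j)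
    (k₀ : ℕ) (hk₀mem : 1 ≤ k₀ ∧ k₀ ≤ m + n ∧ (u k₀).isLeft = true)
    (hk₀max : ∀ j, 1 ≤ j → j ≤ m + n → (u j).isLeft = true → j ≤ k₀)
    (i₁ : ℕ)
    (hi₁mem : 1 ≤ i₁ ∧ i₁ < k₀ ∧ r i₁ = 1 ∧ (u i₁).isLeft = true)
    (hi₁min : ∀ j, 1 ≤ j → j < k₀ → r j = 1 → (u j).isLeft = true → i₁ ≤ j)
    (hS₂ : ∃ i, i₁ + 1 ≤ i ∧ i ≤ m + n ∧ (u i).isLeft = true ∧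
      (∑ k ∈ Finset.Icc 1 (i - 1), (f (u k) : ℤ)) - f (u i₁) < (f (u i) : ℤ)) :
    ∑ v, f v ≤ 2 ^ (m + n) - 2 ^ m + 1 :=
  stmt_17_general m n hn f hf u hu hmono s r hs0 hs hr k₀ hk₀mem i₁ hi₁mem hi₁min
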